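/- Let G be the 4×4 real matrix with rows (2, 0, 1, −1), (0, 2, 1, φ−1), (1, 1, 2, −1), (−1, φ−1, −1, 2) (the Gram matrix of the icosian basis under the polar norm pairing). Then G is invertible and every entry of G⁻¹ lies in ℤ + ℤφ ⊂ ℝ. -/

import Mathlib

noncomputable def φ : ℝ := (1 + Real.sqrt 5) / 2

/-- The golden integer ring `ℤ + ℤφ` as a subset of `ℝ`. -/
def Zφ : Set ℝ := {x | ∃ a b : ℤ, x = (a : ℝ) + (b : ℝ) * φ}

/-- The Gram matrix of the icosian basis under the polar norm pairing. -/
noncomputable def icosianGram : Matrix (Fin 4) (Fin 4) ℝ :=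
  !![2, 0, 1, -1; 0, 2, 1, φ - 1; 1, 1, 2, -1; -1, φ - 1, -1, 2]

/-!
`G⁻¹ = (det G)⁻¹ • adj G`, and the adjugate is a polynomial in the entries of `G`, so it has
entries in the ring `ℤ + ℤφ`. Since `det G = φ + 1 = φ²` is a unit of that ring, with inverse
`(φ - 1)² = 2 - φ`, the entries of `G⁻¹` lie in `ℤ + ℤφ` as well.
-/

theorem Matrix.inv_apply_mem_of_inverse_det_mem {n R : Type*} [Fintype n] [DecidableEq n]
    [CommRing R] (S : Subring R) {A : Matrix n n R} (hA : ∀ i j, A i j ∈ S)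
    (hdet : Ring.inverse A.det ∈ S) (i j : n) : A⁻¹ i j ∈ S := by
  set B : Matrix n n S := Matrix.of fun i j => ⟨A i j, hA i j⟩
  have hAB : A = S.subtype.mapMatrix B := rfl
  have hadj : A.adjugate = S.subtype.mapMatrix B.adjugate := by
    rw [hAB, RingHom.map_adjugate]
  rw [Matrix.inv_def, Matrix.smul_apply, hadj, smul_eq_mul]
  exact S.mul_mem hdet (Subtype.prop _)

theorem φ_sq : φ ^ 2 = φ + 1 := by
  have h : Real.sqrt 5 ^ 2 = 5 := Real.sq_sqrt (by norm_num)
  unfold φ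
  linear_combination h / 4

theorem φ_pos : 0 < φ := by
  unfold φ
  positivity

theorem inv_φ_add_one : (φ + 1)⁻¹ = 2 - φ := by
  apply inv_eq_of_mul_eq_one_right
  linear_combination -φ_sq

def goldenSubring : Subring ℝ where
  carrier := Zφ
  mul_mem' := by
    rintro _ _ ⟨a, b, rfl⟩ ⟨c, d, rfl⟩
    exact ⟨a * c + b * d, a * d + b * c + b * d, by
      push_cast
      linear_combination (b * d : ℝ) * φ_sq⟩
  one_mem' := ⟨1, 0, by simp⟩
  add_mem' := by
    rintro _ _ ⟨a, b, rfl⟩ ⟨c, d, rfl⟩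
    exact ⟨a + c, b + d, by push_cast; ring⟩
  zero_mem' := ⟨0, 0, by simp⟩
  neg_mem' := by
    rintro _ ⟨a, b, rfl⟩
    exact ⟨-a, -b, by push_cast; ring⟩

theorem φ_mem_goldenSubring : φ ∈ goldenSubring := ⟨0, 1, by simp⟩

theorem icosianGram_apply_mem_goldenSubring (i j : Fin 4) : icosianGram i j ∈ goldenSubring := by
  have hφ := φ_mem_goldenSubring
  fin_cases i <;> fin_cases j <;> simp [icosianGram, sub_mem, one_mem, ofNat_mem, hφ]

theorem icosianGram_det : icosianGram.det = φ + 1 := by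
  rw [Matrix.det_succ_row_zero]
  simp [Fin.sum_univ_succ, icosianGram, Matrix.det_fin_three, Fin.succAbove]
  linear_combination -3 * φ_sq

/-- The icosian Gram matrix is invertible and every entry of its inverse lies in `ℤ + ℤφ`. -/
theorem icosian_gram_inverse_golden :
    IsUnit icosianGram ∧ ∀ r s : Fin 4, icosianGram⁻¹ r s ∈ Zφ := by
  have hdet_ne : icosianGram.det ≠ 0 := by
    rw [icosianGram_det]
    linarith [φ_pos]
  have hdet_inv : Ring.inverse icosianGram.det ∈ goldenSubring := by
    rw [Ring.inverse_eq_inv', icosianGram_det, inv_φ_add_one]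
    exact ⟨2, -1, by push_cast; ring⟩
  exact ⟨(Matrix.isUnit_iff_isUnit_det _).mpr hdet_ne.isUnit,
    Matrix.inv_apply_mem_of_inverse_det_mem goldenSubring
      icosianGram_apply_mem_goldenSubring hdet_inv⟩
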